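/- arXiv:1502.04615 — 3 statements merged into one kernel-verified Lean document; each statement's English description precedes it below -/
import Mathlib

section
/- Let G = M_27 = ⟨a, b | a⁹ = b³ = e, b⁻¹ab = a⁴⟩ and set Z₀ = {e}, Z₁ = {a³b, a⁶b²}, Z₂ = {a, a³, a⁶, a⁸, a⁴b², a⁷b, a⁸b, a⁸b²}, Z₃ = G \ (Z₀ ∪ Z₁ ∪ Z₂). Then {Z₀, Z₁, Z₂, Z₃} is a partition of G with Z_i = Z_i⁻¹ for all i, and the ℤ-span 𝒜 of the elements ξ_i = Z̲_i (i = 0,…,3) in ℤG is closed under multiplication and commutative; hence 𝒜 is a commutative S-ring over G with basic sets Z₀, Z₁, Z₂, Z₃. -/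
open scoped Pointwise

/-- For `X ⊆ G`, the element `X̲ = Σ_{x ∈ X} x` of the integral group ring `ℤG`. -/
noncomputable def grpSum (G : Type*) [Group G] (X : Set G) : MonoidAlgebra ℤ G :=
  ∑ᶠ x ∈ X, MonoidAlgebra.of ℤ G x

/-- The ℤ-span of the sums `X̲` over `X ∈ 𝒮` in the group ring `ℤG`. -/
noncomputable def sRingSpan (G : Type*) [Group G] (S : Set (Set G)) :
    Submodule ℤ (MonoidAlgebra ℤ G) :=
  Submodule.span ℤ (grpSum G '' S)

/-- `S` is the set of basic sets of an S-ring over `G`: `S` is a partition of `G`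
containing `{1}`, closed under inversion, and its ℤ-span is closed under multiplication. -/
structure IsSRing (G : Type*) [Group G] [Finite G] (S : Set (Set G)) : Prop where
  nonempty : ∀ X ∈ S, X.Nonempty
  covers : ∀ g : G, ∃! X, X ∈ S ∧ g ∈ X
  one_mem : ({1} : Set G) ∈ S
  inv_mem : ∀ X ∈ S, X⁻¹ ∈ S
  mul_mem : ∀ X ∈ S, ∀ Y ∈ S, grpSum G X * grpSum G Y ∈ sRingSpan G S

/-- The subgroup `G_right` of `Sym(G)` consisting of the right translations `x ↦ x * g`. -/
def rightShifts (G : Type*) [Group G] : Subgroup (Equiv.Perm G) where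
  carrier := {σ | ∃ g : G, σ = Equiv.mulRight g}
  one_mem' := ⟨1, Equiv.ext fun x => by simp⟩
  mul_mem' := by
    rintro σ τ ⟨g, rfl⟩ ⟨h, rfl⟩
    exact ⟨h * g, Equiv.ext fun x => by simp [Equiv.Perm.mul_apply, mul_assoc]⟩
  inv_mem' := by
    rintro σ ⟨g, rfl⟩
    exact ⟨g⁻¹, by simp [Equiv.Perm.inv_def]⟩

/-- The orbits of the stabilizer `Γ_e` of the identity in `Γ`, as subsets of `G`. -/
def stabOrbits {G : Type*} [Group G] (Γ : Subgroup (Equiv.Perm G)) : Set (Set G) :=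
  {X | ∃ g : G, X = {h | ∃ σ ∈ Γ, σ 1 = 1 ∧ σ g = h}}

/-- An S-ring (given by its partition `S` of basic sets) is schurian if its span equals
`𝒜(Γ,G)` for some `Γ` with `G_right ≤ Γ ≤ Sym(G)`. -/
def IsSchurian (G : Type*) [Group G] (S : Set (Set G)) : Prop :=
  ∃ Γ : Subgroup (Equiv.Perm G), rightShifts G ≤ Γ ∧
    sRingSpan G S = sRingSpan G (stabOrbits Γ)

/-- The automorphism group `Aut(𝒜)` of the S-ring with basic sets `S`: bijections of `G`
fixing `1` and preserving each basic relation `R(X) = {(g, xg) : g ∈ G, x ∈ X}`. -/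
def srAut {G : Type*} [Group G] (S : Set (Set G)) : Subgroup (Equiv.Perm G) where
  carrier := {f | f 1 = 1 ∧ ∀ X ∈ S, ∀ g h : G, (h * g⁻¹ ∈ X ↔ f h * (f g)⁻¹ ∈ X)}
  one_mem' := ⟨rfl, fun X _ g h => by simp⟩
  mul_mem' := by
    rintro f₁ f₂ ⟨e₁, p₁⟩ ⟨e₂, p₂⟩
    refine ⟨by simp [Equiv.Perm.mul_apply, e₂, e₁], fun X hX g h => ?_⟩
    simpa [Equiv.Perm.mul_apply] using (p₂ X hX g h).trans (p₁ X hX (f₂ g) (f₂ h))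
  inv_mem' := by
    rintro f ⟨e₁, p₁⟩
    refine ⟨by rw [Equiv.Perm.inv_def, Equiv.symm_apply_eq, e₁], fun X hX g h => ?_⟩
    simpa using (p₁ X hX (f⁻¹ g) (f⁻¹ h)).symm

/-- The set of orbits of a subgroup `Δ ≤ Sym(G)` on `G`. -/
def permOrbits {G : Type*} [Group G] (Δ : Subgroup (Equiv.Perm G)) : Set (Set G) :=
  {X | ∃ g : G, X = {h | ∃ σ ∈ Δ, σ g = h}}

/-- `P` is a block system for `Γ ≤ Sym(G)` acting on `G`. -/
def IsBlockSystem {G : Type*} [Group G] (Γ : Subgroup (Equiv.Perm G))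
    (P : Set (Set G)) : Prop :=
  (∀ g : G, ∃! B, B ∈ P ∧ g ∈ B) ∧ (∀ σ ∈ Γ, ∀ B ∈ P, σ '' B ∈ P)

/-- The partition of `G` into the cosets `{Hg : g ∈ G}` of a subset `H ⊆ G`. -/
def cosetsOf {G : Type*} [Group G] (H : Set G) : Set (Set G) :=
  {B | ∃ g : G, B = {x | ∃ u ∈ H, x = u * g}}

/-- The partition of `G` into singletons. -/
def singletonPartition (G : Type*) : Set (Set G) := {B | ∃ g : G, B = {g}}


/-!
The group `M₂₇` is modelled concretely on `ZMod 9 × ZMod 3`, the pair `(i, j)` standing for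
`aⁱbʲ`; the relations make `(i, j) ↦ aⁱbʲ` a homomorphism onto `G`, and comparing orders
makes it an isomorphism. S-rings are transported along group isomorphisms, so it suffices to
check the S-ring axioms in the model, where they are decidable: a product `X̲ Y̲` lies in the
span exactly when the number of ways to write `g = xy` with `x ∈ X`, `y ∈ Y` depends only on
the basic set containing `g`. Commutativity needs no computation: the anti-automorphism of `ℤG`
induced by `g ↦ g⁻¹` fixes the span of symmetric basic sets, hence `X̲ Y̲ = (X̲ Y̲)* = Y̲ X̲`.
-/

open MonoidAlgebra Function
open scoped Finset

theorem pow_val_natCast {M : Type*} [Monoid M] {x : M} {n : ℕ} (hx : x ^ n = 1) (m : ℕ) :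
    x ^ (m : ZMod n).val = x ^ m := by
  rw [ZMod.val_natCast, ← pow_eq_pow_mod m hx]

theorem commute_of_mem_span {R A : Type*} [CommSemiring R] [Semiring A] [Algebra R A]
    {s : Set A} (hs : ∀ x ∈ s, ∀ y ∈ s, Commute x y) {x y : A}
    (hx : x ∈ Submodule.span R s) (hy : y ∈ Submodule.span R s) : Commute x y :=
  Algebra.commute_of_mem_adjoin_of_forall_mem_commute (Algebra.span_le_adjoin R s hy)
    fun z hz => (Algebra.commute_of_mem_adjoin_of_forall_mem_commute
      (Algebra.span_le_adjoin R s hx) fun w hw => hs z hz w hw).symm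

theorem Finset.sum_univ_eq_sum_sum_of_existsUnique {ι α M : Type*} [Fintype ι] [Fintype α]
    [DecidableEq α] [AddCommMonoid M] (X : ι → Finset α) (hX : ∀ a, ∃! i, a ∈ X i)
    (f : α → M) : ∑ a, f a = ∑ i, ∑ a ∈ X i, f a := by
  rw [← Finset.sum_biUnion fun i _ j _ hij =>
    Finset.disjoint_left.2 fun a hi hj => hij ((hX a).unique hi hj)]
  congr 1
  ext a
  simpa using (hX a).exists

section GroupRing

variable {G H : Type*} [Group G] [Group H]

theorem mapDomain_grpSum [Finite G] {f : G → H} (hf : Injective f) (X : Set G) :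
    mapDomain f (grpSum G X) = grpSum H (f '' X) := by
  rw [grpSum, grpSum, finsum_mem_image hf.injOn,
    show mapDomain f = mapDomainLinearMap ℤ ℤ f from rfl, ← LinearMap.toAddMonoidHom_coe, AddMonoidHom.map_finsum_mem _ _ X.toFinite]
  simp [of_apply]

theorem mapDomain_inv_mul (x y : MonoidAlgebra ℤ G) :
    mapDomain (·⁻¹) (x * y) = mapDomain (·⁻¹) y * mapDomain (·⁻¹) x := by
  induction x using MonoidAlgebra.induction_linear with
  | zero => simp
  | add x x' hx hx' => simp [add_mul, mul_add, mapDomain_add, hx, hx']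
  | single g r =>
    induction y using MonoidAlgebra.induction_linear with
    | zero => simp
    | add y y' hy hy' => simp [add_mul, mul_add, mapDomain_add, hy, hy']
    | single h s => simp [single_mul_single, mapDomain_single, mul_comm r s]

theorem grpSum_coe (X : Finset G) : grpSum G X = ∑ x ∈ X, of ℤ G x :=
  finsum_mem_coe_finset _ X

variable [DecidableEq G]

def mulCount (X Y : Finset G) (g : G) : ℕ := #{x ∈ X | x⁻¹ * g ∈ Y}

theorem sum_of_mul_sum_of [Fintype G] (X Y : Finset G) :
    (∑ x ∈ X, of ℤ G x) * (∑ y ∈ Y, of ℤ G y) = ∑ g, mulCount X Y g • of ℤ G g := by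
  have inner (x : G) : ∑ y ∈ Y, of ℤ G (x * y) = ∑ g, if x⁻¹ * g ∈ Y then of ℤ G g else 0 := by
    calc ∑ y ∈ Y, of ℤ G (x * y) = ∑ y, if y ∈ Y then of ℤ G (x * y) else 0 := by
          rw [Finset.sum_ite_mem, Finset.univ_inter]
      _ = _ := Fintype.sum_equiv (Equiv.mulLeft x) _ _ fun y => by simp
  simp_rw [Finset.sum_mul_sum, ← map_mul, inner]
  rw [Finset.sum_comm]
  refine Finset.sum_congr rfl fun g _ => ?_
  rw [← Finset.sum_filter, Finset.sum_const, mulCount]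

end GroupRing

section SRing

variable {G H : Type*} [Group G] [Group H] [Finite G]

theorem IsSRing.commute_of_forall_inv_eq {S : Set (Set G)} (hS : IsSRing G S)
    (hsymm : ∀ X ∈ S, X⁻¹ = X) {x y : MonoidAlgebra ℤ G} (hx : x ∈ sRingSpan G S)
    (hy : y ∈ sRingSpan G S) : x * y = y * x := by
  have hfix : ∀ x ∈ sRingSpan G S, mapDomain (·⁻¹) x = x := fun x hx =>
    LinearMap.eqOn_span' (f := mapDomainLinearMap ℤ ℤ (·⁻¹ : G → G)) (g := LinearMap.id)
      (by
        rintro _ ⟨X, hX, rfl⟩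
        change mapDomain (·⁻¹) (grpSum G X) = grpSum G X
        rw [mapDomain_grpSum inv_injective, Set.image_inv_eq_inv, hsymm X hX]) hx
  have hgen (X : Set G) (hX : X ∈ S) : grpSum G X ∈ sRingSpan G S :=
    Submodule.subset_span ⟨X, hX, rfl⟩
  refine commute_of_mem_span ?_ hx hy
  rintro _ ⟨X, hX, rfl⟩ _ ⟨Y, hY, rfl⟩
  calc grpSum G X * grpSum G Y = mapDomain (·⁻¹) (grpSum G X * grpSum G Y) :=
        (hfix _ (hS.mul_mem X hX Y hY)).symm
    _ = mapDomain (·⁻¹) (grpSum G Y) * mapDomain (·⁻¹) (grpSum G X) := mapDomain_inv_mul _ _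
    _ = grpSum G Y * grpSum G X := by rw [hfix _ (hgen Y hY), hfix _ (hgen X hX)]

theorem IsSRing.image_mulEquiv [Finite H] {S : Set (Set H)} (hS : IsSRing H S) (e : H ≃* G) :
    IsSRing G ((e '' ·) '' S) := by
  have hspan : sRingSpan G ((e '' ·) '' S) = (sRingSpan H S).map (mapDomainLinearMap ℤ ℤ e) := by
    rw [sRingSpan, sRingSpan, Submodule.map_span, Set.image_image, Set.image_image]
    congr 1
    exact Set.image_congr fun X _ => (mapDomain_grpSum e.injective X).symm
  refine ⟨?_, fun g => ?_, ⟨{1}, hS.one_mem, by simp⟩, ?_, ?_⟩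
  · rintro _ ⟨X, hX, rfl⟩
    exact (hS.nonempty X hX).image e
  · obtain ⟨X, ⟨hX, hgX⟩, huniq⟩ := hS.covers (e.symm g)
    refine ⟨e '' X, ⟨Set.mem_image_of_mem _ hX, e.symm g, hgX, e.apply_symm_apply g⟩, ?_⟩
    rintro _ ⟨⟨Y, hY, rfl⟩, h, hhY, rfl⟩
    rw [huniq Y ⟨hY, by simpa using hhY⟩]
  · rintro _ ⟨X, hX, rfl⟩
    exact ⟨X⁻¹, hS.inv_mem X hX, Set.image_inv e X⟩
  · rintro _ ⟨X, hX, rfl⟩ _ ⟨Y, hY, rfl⟩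
    rw [← mapDomain_grpSum e.injective, ← mapDomain_grpSum e.injective, ← mapDomain_mul e, hspan]
    exact Submodule.mem_map_of_mem (hS.mul_mem X hX Y hY)

end SRing

theorem isSRing_range_of_mulCount {G ι : Type*} [Group G] [Fintype G] [DecidableEq G] [Fintype ι]
    (X : ι → Finset G) (rep : ι → G) (hrep : ∀ i, rep i ∈ X i) (hX : ∀ g, ∃! i, g ∈ X i)
    (hone : ∃ i, X i = {1}) (hinv : ∀ i, ∃ j, (X i)⁻¹ = X j)
    (hcount : ∀ i j k, ∀ g ∈ X k, mulCount (X i) (X j) g = mulCount (X i) (X j) (rep k)) :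
    IsSRing G (Set.range fun i => (X i : Set G)) := by
  refine ⟨?_, fun g => ?_, ?_, ?_, ?_⟩
  · rintro _ ⟨i, rfl⟩
    exact ⟨rep i, hrep i⟩
  · obtain ⟨i, hi, huniq⟩ := hX g
    refine ⟨X i, ⟨⟨i, rfl⟩, hi⟩, ?_⟩
    rintro _ ⟨⟨j, rfl⟩, hj⟩
    rw [huniq j hj]
  · obtain ⟨i, hi⟩ := hone
    exact ⟨i, by simp [hi]⟩
  · rintro _ ⟨i, rfl⟩
    obtain ⟨j, hj⟩ := hinv i
    exact ⟨j, by simp only [← hj, Finset.coe_inv]⟩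
  · rintro _ ⟨i, rfl⟩ _ ⟨j, rfl⟩
    have hexpand : grpSum G (X i) * grpSum G (X j)
        = ∑ k, mulCount (X i) (X j) (rep k) • grpSum G (X k) := by
      rw [grpSum_coe, grpSum_coe, sum_of_mul_sum_of,
        Finset.sum_univ_eq_sum_sum_of_existsUnique X hX]
      refine Finset.sum_congr rfl fun k _ => ?_
      rw [grpSum_coe, Finset.smul_sum]
      exact Finset.sum_congr rfl fun g hg => by rw [hcount i j k g hg]
    rw [hexpand]
    exact Submodule.sum_mem _ fun k _ =>
      nsmul_mem (Submodule.subset_span (Set.mem_image_of_mem _ (Set.mem_range_self k))) _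

theorem pow_mul_pow_eq_of_mul_eq {M : Type*} [Monoid M] {a b : M} {s : ℕ}
    (h : b * a = a ^ s * b) (j k : ℕ) : b ^ j * a ^ k = a ^ (s ^ j * k) * b ^ j := by
  have hb (k : ℕ) : SemiconjBy b (a ^ k) (a ^ (s * k)) := by
    rw [pow_mul]
    exact SemiconjBy.pow_right h k
  induction j generalizing k with
  | zero => simp
  | succ j ih =>
    rw [pow_succ, pow_succ, mul_assoc (s ^ j)]
    exact SemiconjBy.mul_left (ih (s * k)) (hb k)

def M27 : Type := ZMod 9 × ZMod 3

namespace M27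

instance : Fintype M27 := inferInstanceAs (Fintype (ZMod 9 × ZMod 3))
instance : DecidableEq M27 := inferInstanceAs (DecidableEq (ZMod 9 × ZMod 3))

instance : One M27 := ⟨(0, 0)⟩
-- `bʲ aᵏ = a^(7ʲ k) bʲ`, since `b a b⁻¹ = a⁷` in `M₂₇`.
instance : Mul M27 := ⟨fun x y => (x.1 + 7 ^ x.2.val * y.1, x.2 + y.2)⟩
instance : Inv M27 := ⟨fun x => (-(7 ^ (-x.2).val * x.1), -x.2)⟩

theorem seven_pow_val_add (s t : ZMod 3) :
    (7 : ZMod 9) ^ (s + t).val = 7 ^ s.val * 7 ^ t.val := by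
  decide +revert

instance : Group M27 := Group.ofLeftAxioms
  (fun x y z => Prod.ext
    (show x.1 + 7 ^ x.2.val * y.1 + 7 ^ (x.2 + y.2).val * z.1
      = x.1 + 7 ^ x.2.val * (y.1 + 7 ^ y.2.val * z.1) by rw [seven_pow_val_add]; ring)
    (add_assoc x.2 y.2 z.2))
  (fun x => Prod.ext (show (0 : ZMod 9) + 7 ^ (0 : ZMod 3).val * x.1 = x.1 by simp)
    (zero_add x.2))
  (fun x => Prod.ext (neg_add_cancel _) (neg_add_cancel x.2))

def el (n m : ℕ) : M27 := ((n : ZMod 9), (m : ZMod 3))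

theorem el_val (x : M27) : el x.1.val x.2.val = x :=
  Prod.ext (ZMod.natCast_zmod_val x.1) (ZMod.natCast_zmod_val x.2)

theorem el_mul_el (i j k l : ℕ) : el i j * el k l = el (i + 7 ^ j * k) (j + l) := by
  refine Prod.ext ?_ (Nat.cast_add j l).symm
  change (i : ZMod 9) + 7 ^ (j : ZMod 3).val * k = ((i + 7 ^ j * k : ℕ) : ZMod 9)
  rw [pow_val_natCast (by decide : (7 : ZMod 9) ^ 3 = 1)]
  push_cast
  rfl

def z1 : Finset M27 := {el 3 1, el 6 2}
def z2 : Finset M27 := {el 1 0, el 3 0, el 6 0, el 8 0, el 4 2, el 7 1, el 8 1, el 8 2}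

def basicSet : Fin 4 → Finset M27 := ![{1}, z1, z2, ({1} ∪ z1 ∪ z2)ᶜ]

theorem range_basicSet : Set.range (fun i => (basicSet i : Set M27))
    = {↑({1} : Finset M27), ↑z1, ↑z2, ↑(({1} ∪ z1 ∪ z2)ᶜ : Finset M27)} := by
  ext X
  simp only [Set.mem_range, Fin.exists_fin_succ, Set.mem_insert_iff, Set.mem_singleton_iff]
  simp [basicSet, eq_comm]

theorem basicSet_inv (i : Fin 4) : (basicSet i)⁻¹ = basicSet i := by
  decide +revert

theorem isSRing_basicSet : IsSRing M27 (Set.range fun i => (basicSet i : Set M27)) :=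
  isSRing_range_of_mulCount basicSet ![1, el 3 1, el 1 0, el 1 1] (by decide)
    (fun g => existsUnique_of_exists_of_unique (by decide +revert) (by decide +revert))
    ⟨0, rfl⟩ (fun i => ⟨i, basicSet_inv i⟩) (by decide)

variable {G : Type*} [Group G] {a b : G}

def word (a b : G) (x : M27) : G := a ^ x.1.val * b ^ x.2.val

theorem word_el (ha : a ^ 9 = 1) (hb : b ^ 3 = 1) (n m : ℕ) :
    word a b (el n m) = a ^ n * b ^ m :=
  congr_arg₂ (· * ·) (pow_val_natCast ha n) (pow_val_natCast hb m)

theorem word_mul (ha : a ^ 9 = 1) (hb : b ^ 3 = 1) (hab : b⁻¹ * a * b = a ^ 4) (x y : M27) :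
    word a b (x * y) = word a b x * word a b y := by
  have hba : b * a = a ^ 7 * b := by
    have hconj : b⁻¹ * a ^ 7 * b = a := by
      have h := conj_pow (a := b⁻¹) (b := a) (i := 7)
      rw [inv_inv] at h
      rw [← h, hab, ← pow_mul, pow_eq_pow_mod _ ha]
      norm_num
    calc b * a = b * (b⁻¹ * a ^ 7 * b) := by rw [hconj]
      _ = a ^ 7 * b := by group
  rw [← el_val x, ← el_val y]
  generalize x.1.val = i, x.2.val = j, y.1.val = k, y.2.val = l
  rw [el_mul_el, word_el ha hb, word_el ha hb, word_el ha hb, mul_assoc (a ^ i),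
    ← mul_assoc (b ^ j), pow_mul_pow_eq_of_mul_eq hba, pow_add, pow_add]
  simp only [mul_assoc]

def hom (ha : a ^ 9 = 1) (hb : b ^ 3 = 1) (hab : b⁻¹ * a * b = a ^ 4) : M27 →* G :=
  MonoidHom.mk' (word a b) (word_mul ha hb hab)

theorem hom_bijective (hcard : Nat.card G = 27) (ha : a ^ 9 = 1) (hb : b ^ 3 = 1)
    (hab : b⁻¹ * a * b = a ^ 4) (hgen : Subgroup.closure {a, b} = ⊤) :
    Bijective (hom ha hb hab) := by
  have hsurj : Surjective (hom ha hb hab) := by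
    rw [← MonoidHom.range_eq_top, eq_top_iff, ← hgen, Subgroup.closure_le,
      Set.insert_subset_iff, Set.singleton_subset_iff]
    exact ⟨⟨el 1 0, (word_el ha hb 1 0).trans (by simp)⟩,
      ⟨el 0 1, (word_el ha hb 0 1).trans (by simp)⟩⟩
  exact hsurj.bijective_of_nat_card_le (by rw [hcard, Nat.card_eq_fintype_card]; rfl)

end M27

/-- The partition `{Z₀, Z₁, Z₂, Z₃}` of `M₂₇` is inversion-closed and spans a
commutative S-ring. -/
theorem M27_sring
    {G : Type*} [Group G] [Finite G] (a b : G)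
    (hcard : Nat.card G = 27) (ha : a ^ 9 = 1) (hb3 : b ^ 3 = 1)
    (hab : b⁻¹ * a * b = a ^ 4) (hgen : Subgroup.closure {a, b} = ⊤)
    (Z0 Z1 Z2 Z3 : Set G) (S : Set (Set G))
    (hZ0 : Z0 = {1}) (hZ1 : Z1 = {a ^ 3 * b, a ^ 6 * b ^ 2})
    (hZ2 : Z2 = {a, a ^ 3, a ^ 6, a ^ 8, a ^ 4 * b ^ 2, a ^ 7 * b, a ^ 8 * b, a ^ 8 * b ^ 2})
    (hZ3 : Z3 = Set.univ \ (Z0 ∪ Z1 ∪ Z2))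
    (hS : S = {Z0, Z1, Z2, Z3}) :
    IsSRing G S ∧ (∀ X ∈ S, X⁻¹ = X) ∧
      (∀ x ∈ sRingSpan G S, ∀ y ∈ sRingSpan G S, x * y = y * x) := by
  set e := MulEquiv.ofBijective _ (M27.hom_bijective hcard ha hb3 hab hgen)
  have he (n m : ℕ) : e (M27.el n m) = a ^ n * b ^ m := M27.word_el ha hb3 n m
  have h0 : e '' ↑({1} : Finset M27) = Z0 := by simp [hZ0]
  have h1 : e '' ↑M27.z1 = Z1 := by simp [M27.z1, Set.image_insert_eq, he, hZ1]
  have h2 : e '' ↑M27.z2 = Z2 := by simp [M27.z2, Set.image_insert_eq, he, hZ2]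
  have h3 : e '' ↑(({1} ∪ M27.z1 ∪ M27.z2)ᶜ : Finset M27) = Z3 := by
    rw [Finset.coe_compl, Set.image_compl_eq e.bijective, Finset.coe_union, Finset.coe_union,
      Set.image_union, Set.image_union, h0, h1, h2, hZ3, Set.compl_eq_univ_sdiff]
  have hSe : S = (e '' ·) '' Set.range fun i => (M27.basicSet i : Set M27) := by
    rw [M27.range_basicSet, hS, ← h0, ← h1, ← h2, ← h3]
    simp only [Set.image_insert_eq, Set.image_singleton]
  have hsring : IsSRing G S := hSe ▸ M27.isSRing_basicSet.image_mulEquiv e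
  have hsymm : ∀ X ∈ S, X⁻¹ = X := by
    rw [hSe]
    rintro _ ⟨_, ⟨i, rfl⟩, rfl⟩
    rw [← Set.image_inv, ← Finset.coe_inv, M27.basicSet_inv]
  exact ⟨hsring, hsymm, fun x hx y hy => hsring.commute_of_forall_inv_eq hsymm hx hy⟩
end

section
/- Let n ≥ 4, G = M_{3^n}, c = a^{3^{n-2}}, C = ⟨c⟩, B = ⟨b⟩, H = C×B, and let 𝒜 be the S-ring over G whose basic sets are Z₀ = {e}, Z₁ = {b, b²}, Z₂ = {c, c²}, Z₃ = {cb, cb², c²b, c²b²}, Z₄ = a{e, cb, c²b²} ∪ a⁻¹{e, c²b, cb²}, Z₅ = (aH ∪ a⁻¹H) \ Z₄, X_k = a^{3k}C ∪ a^{-3k}C and Y_k = (a^{3k}H ∪ a^{-3k}H) \ X_k for k = 1,…,(3^{n-3}−1)/2, and T_j = a^jH ∪ a^{-j}H for 2 ≤ j ≤ (3^{n-2}−1)/2 with 3 ∤ j. If 𝒜 is schurian, then for every α ∈ Aut(𝒜) exactly one of the following holds: α maps each coset of H in G to itself, or α maps the coset a^iH to a^{-i}H for every integer i. -/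
open scoped Pointwise

/-!
Since `Z₀ ∪ Z₁ ∪ Z₂ ∪ Z₃ = H` and `Z₄ ∪ Z₅ = aH ∪ a⁻¹H`, every `α ∈ Aut(𝒜)` preserves the
relations `hg⁻¹ ∈ H` and `hg⁻¹ ∈ aH ∪ a⁻¹H`. Here `H = ⟨c⟩⟨b⟩` is a normal subgroup of order at
most `9` with `G/H = ⟨aH⟩` cyclic of order at least `3`, so `α` induces on `G/H` a bijection fixing
the identity which maps neighbours in the cycle `Cay(G/H, {aH, a⁻¹H})` to neighbours. Walking
along the cycle `1, aH, a²H, …` shows that such a map is either the identity or inversion.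
-/

open Subgroup

def PreservesBasicRel {G : Type*} [Group G] (f : G → G) (X : Set G) : Prop :=
  ∀ g h : G, h * g⁻¹ ∈ X ↔ f h * (f g)⁻¹ ∈ X

theorem PreservesBasicRel.union {G : Type*} [Group G] {f : G → G} {X Y : Set G}
    (hX : PreservesBasicRel f X) (hY : PreservesBasicRel f Y) : PreservesBasicRel f (X ∪ Y) :=
  fun g h => by simp only [Set.mem_union, hX g h, hY g h]

section Cycle

variable {Q : Type*} [Group Q] {d : Q}

theorem exists_eq_pow_of_mul_inv_mem_pair (ψ : ℕ → Q) (h0 : ψ 0 = 1)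
    (hstep : ∀ i, ψ (i + 1) * (ψ i)⁻¹ ∈ ({d, d⁻¹} : Set Q)) (hne : ∀ i, ψ (i + 2) ≠ ψ i) :
    ∃ e ∈ ({d, d⁻¹} : Set Q), ∀ i, ψ i = e ^ i := by
  have he : ψ 1 ∈ ({d, d⁻¹} : Set Q) := by simpa [h0] using hstep 0
  set e := ψ 1
  have hpair : ({d, d⁻¹} : Set Q) = {e, e⁻¹} := by
    rcases he with h | h <;> rw [h]
    rw [inv_inv, Set.pair_comm]
  suffices h : ∀ i, ψ i = e ^ i ∧ ψ (i + 1) = e ^ (i + 1) from ⟨e, he, fun i => (h i).1⟩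
  intro i
  induction i with
  | zero => simp [h0, e]
  | succ k ih =>
    refine ⟨ih.2, ?_⟩
    have hk := hstep (k + 1)
    rw [hpair, Set.mem_insert_iff, Set.mem_singleton_iff, mul_inv_eq_iff_eq_mul,
      mul_inv_eq_iff_eq_mul, ih.2] at hk
    rcases hk with hk | hk
    · rw [hk, ← pow_succ']
    · refine absurd ?_ (hne k)
      rw [hk, ih.1, pow_succ', inv_mul_cancel_left]

theorem xor_forall_eq_self_forall_eq_inv [Finite Q] (hd : d ^ 2 ≠ 1) (htop : zpowers d = ⊤)
    (φ : Q → Q) (h1 : φ 1 = 1) (hinj : Function.Injective φ)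
    (hadj : ∀ x y, x * y⁻¹ ∈ ({d, d⁻¹} : Set Q) → φ x * (φ y)⁻¹ ∈ ({d, d⁻¹} : Set Q)) :
    Xor (∀ x, φ x = x) (∀ x, φ x = x⁻¹) := by
  have hstep (i : ℕ) : d ^ (i + 1) * (d ^ i)⁻¹ ∈ ({d, d⁻¹} : Set Q) := by simp [pow_succ']
  have hne (i : ℕ) : d ^ (i + 2) ≠ d ^ i := by rwa [pow_add, Ne, mul_eq_left]
  obtain ⟨e, he, hψ⟩ := exists_eq_pow_of_mul_inv_mem_pair (fun i => φ (d ^ i)) (by simpa using h1)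
    (fun i => hadj _ _ (hstep i)) (fun i => hinj.ne (hne i))
  have hpow (x : Q) : ∃ i : ℕ, d ^ i = x := mem_powers_iff_mem_zpowers.2 (htop ▸ mem_top x)
  have hd' : d ≠ d⁻¹ := fun h => hd (by rw [sq, mul_eq_one_iff_eq_inv, ← h])
  rcases he with rfl | rfl
  · refine Or.inl ⟨fun x => ?_, fun h => hd' ?_⟩
    · obtain ⟨i, rfl⟩ := hpow x
      exact hψ i
    · have h1 := hψ 1
      rw [pow_one, h] at h1
      exact h1.symm
  · refine Or.inr ⟨fun x => ?_, fun h => hd' ?_⟩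
    · obtain ⟨i, rfl⟩ := hpow x
      simpa using hψ i
    · have h1 := hψ 1
      rwa [pow_one, inv_pow, pow_one, h] at h1

theorem sq_ne_one_of_zpowers_eq_top (htop : zpowers d = ⊤) (hcard : 2 < Nat.card Q) :
    d ^ 2 ≠ 1 :=
  pow_ne_one_of_lt_orderOf two_ne_zero (by rwa [← Nat.card_zpowers, htop, card_top])

end Cycle

section Quotient

variable {G : Type*} [Group G] {N : Subgroup G}

theorem mem_smul_coe_iff_mk_eq {g x : G} : x ∈ g • (N : Set G) ↔ (x : G ⧸ N) = g := by
  rw [mem_leftCoset_iff, eq_comm, QuotientGroup.eq, SetLike.mem_coe]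

theorem image_smul_coe_of_mk {φ : G ⧸ N → G ⧸ N} (hinj : Function.Injective φ)
    {f : Equiv.Perm G} (hφ : ∀ g : G, φ g = f g) (g : G) :
    f '' (g • (N : Set G)) = f g • (N : Set G) := by
  ext y
  obtain ⟨x, rfl⟩ := f.surjective y
  rw [f.injective.mem_set_image, mem_smul_coe_iff_mk_eq, mem_smul_coe_iff_mk_eq, ← hφ, ← hφ,
    hinj.eq_iff]

theorem two_lt_card_quotient_of_two_mul_card_lt (hcard : 2 * Nat.card N < Nat.card G) :
    2 < Nat.card (G ⧸ N) := by
  rw [card_eq_card_quotient_mul_card_subgroup N] at hcard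
  exact Nat.lt_of_mul_lt_mul_right hcard

variable [N.Normal]

theorem zpowers_mk_eq_top_of_closure_pair {a b : G} (hgen : closure {a, b} = ⊤) (hb : b ∈ N) :
    zpowers (a : G ⧸ N) = ⊤ := by
  refine eq_top_iff.2 fun x _ => ?_
  obtain ⟨g, rfl⟩ := QuotientGroup.mk_surjective x
  have : closure {a, b} ≤ (zpowers (a : G ⧸ N)).comap (QuotientGroup.mk' N) := by
    rw [closure_le, Set.insert_subset_iff, Set.singleton_subset_iff]
    exact ⟨mem_zpowers _, by simp [(QuotientGroup.eq_one_iff b).2 hb]⟩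
  exact this (hgen ▸ mem_top g)

variable {f : G → G}

theorem PreservesBasicRel.mul_inv_mem_iff {φ : G ⧸ N → G ⧸ N} (hφ : ∀ g : G, φ g = f g)
    {T : Set (G ⧸ N)} (hf : PreservesBasicRel f ((↑) ⁻¹' T)) (x y : G ⧸ N) :
    x * y⁻¹ ∈ T ↔ φ x * (φ y)⁻¹ ∈ T := by
  induction x using QuotientGroup.induction_on
  induction y using QuotientGroup.induction_on
  simp only [hφ, ← QuotientGroup.mk_inv, ← QuotientGroup.mk_mul]
  exact hf _ _

theorem PreservesBasicRel.exists_quotient_map (hf : PreservesBasicRel f N) :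
    ∃ φ : G ⧸ N → G ⧸ N, Function.Injective φ ∧ ∀ g : G, φ g = f g := by
  have hmk (g h : G) : (f g : G ⧸ N) = f h ↔ (g : G ⧸ N) = h := by
    simp only [QuotientGroup.eq_iff_div_mem, div_eq_mul_inv]
    exact (hf h g).symm
  refine ⟨fun x => f x.out, fun x y hxy => ?_, fun g => (hmk _ g).2 (QuotientGroup.out_eq' _)⟩
  simpa using (hmk _ _).1 hxy

theorem xor_image_smul_coe [Finite G] {a : G} (f : Equiv.Perm G) (hf1 : f 1 = 1)
    (hfN : PreservesBasicRel f N) (hfa : PreservesBasicRel f (a • N ∪ a⁻¹ • N))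
    (htop : zpowers (a : G ⧸ N) = ⊤) (hcard : 2 * Nat.card N < Nat.card G) :
    Xor (∀ g : G, f '' (g • (N : Set G)) = g • N)
      (∀ i : ℤ, f '' (a ^ i • (N : Set G)) = a ^ (-i) • N) := by
  obtain ⟨φ, hinj, hφ⟩ := hfN.exists_quotient_map
  have himage (g x : G) : f '' (g • (N : Set G)) = x • N ↔ φ g = x := by
    rw [image_smul_coe_of_mk hinj hφ, leftCoset_eq_iff, ← QuotientGroup.eq, hφ]
  have hpair : a • (N : Set G) ∪ a⁻¹ • N = (↑) ⁻¹' ({(a : G ⧸ N), (a : G ⧸ N)⁻¹} : Set _) := by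
    ext x
    simp [mem_smul_coe_iff_mk_eq]
  rw [hpair] at hfa
  have key := xor_forall_eq_self_forall_eq_inv
    (sq_ne_one_of_zpowers_eq_top htop (two_lt_card_quotient_of_two_mul_card_lt hcard)) htop φ
    (by simpa [hf1] using hφ 1) hinj fun x y => (hfa.mul_inv_mem_iff hφ x y).1
  simp only [himage]
  convert key using 1
  · exact ((QuotientGroup.mk_surjective (s := N)).forall (p := fun x => φ x = x)).symm
  · simp only [zpow_neg, QuotientGroup.mk_inv, QuotientGroup.mk_zpow]
    rw [← forall_mem_zpowers (p := fun x => φ x = x⁻¹), htop]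
    simp only [mem_top, forall_const]

end Quotient

section Presentation

variable {G : Type*} [Group G]

theorem coe_zpowers_eq_of_pow_three_eq_one {x : G} (hx : x ^ 3 = 1) :
    (zpowers x : Set G) = {1, x, x ^ 2} := by
  ext y
  simp only [SetLike.mem_coe, mem_zpowers_iff, Set.mem_insert_iff, Set.mem_singleton_iff]
  constructor
  · rintro ⟨k, rfl⟩
    rw [zpow_eq_zpow_emod k (n := 3) (by exact_mod_cast hx)]
    have : k % 3 = 0 ∨ k % 3 = 1 ∨ k % 3 = 2 := by omega
    rcases this with h | h | h <;> simp [h]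
  · rintro (rfl | rfl | rfl)
    exacts [⟨0, zpow_zero _⟩, ⟨1, zpow_one _⟩, ⟨2, zpow_ofNat _ 2⟩]

theorem coe_zpowers_mul_coe_zpowers_of_pow_three_eq_one {b c : G} (hc : c ^ 3 = 1)
    (hb : b ^ 3 = 1) : (zpowers c : Set G) * zpowers b =
      {1} ∪ {b, b ^ 2} ∪ {c, c ^ 2} ∪ {c * b, c * b ^ 2, c ^ 2 * b, c ^ 2 * b ^ 2} := by
  rw [coe_zpowers_eq_of_pow_three_eq_one hc, coe_zpowers_eq_of_pow_three_eq_one hb]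
  ext x
  simp only [Set.mem_mul, Set.mem_insert_iff, Set.mem_singleton_iff, exists_eq_or_imp, mul_one,
    existsAndEq, true_and, one_mul, Set.union_insert, Set.union_singleton]
  tauto

theorem natCard_coe_zpowers_mul_coe_zpowers_le (b c : G) :
    Nat.card ↑((zpowers c : Set G) * zpowers b) ≤ orderOf c * orderOf b := by
  simpa only [SetLike.coe_sort_coe, Nat.card_zpowers] using
    Set.natCard_mul_le (s := (zpowers c : Set G)) (t := zpowers b)

theorem commute_pow_of_inv_mul_mul_eq_pow_succ {a b : G} {M : ℕ}
    (hab : b⁻¹ * a * b = a ^ (M + 1)) (ha : a ^ (M * M) = 1) : Commute b (a ^ M) := by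
  have hsemi : SemiconjBy b (a ^ (M + 1)) a := by
    rw [SemiconjBy, ← hab]
    group
  have := hsemi.pow_right M
  rwa [← pow_mul, add_mul, one_mul, pow_add, ha, one_mul] at this

theorem mul_mul_inv_eq_of_inv_mul_mul_eq_pow_succ {a b : G} {M : ℕ}
    (hab : b⁻¹ * a * b = a ^ (M + 1)) : a * b * a⁻¹ = b * a ^ M := by
  rw [mul_inv_eq_iff_eq_mul, mul_assoc, ← pow_succ, ← hab]
  group

theorem mem_center_of_commute_of_closure_eq_top {a b c : G} (hgen : closure {a, b} = ⊤)
    (ha : Commute a c) (hb : Commute b c) : c ∈ center G := by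
  rw [← centralizer_univ, ← coe_top, ← hgen, centralizer_closure, mem_centralizer_iff]
  rintro x (rfl | rfl)
  exacts [ha.eq, hb.eq]

theorem pow_mem_center_of_inv_mul_mul_eq_pow_succ {n : ℕ} (hn : 3 ≤ n) {a b : G}
    (ha : a ^ 3 ^ (n - 1) = 1) (hab : b⁻¹ * a * b = a ^ (3 ^ (n - 2) + 1))
    (hgen : closure {a, b} = ⊤) : a ^ 3 ^ (n - 2) ∈ center G := by
  have haMM : a ^ (3 ^ (n - 2) * 3 ^ (n - 2)) = 1 := by
    rw [← pow_add, show n - 2 + (n - 2) = n - 1 + (n - 3) by omega, pow_add, pow_mul, ha, one_pow]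
  exact mem_center_of_commute_of_closure_eq_top hgen (Commute.self_pow a _)
    (commute_pow_of_inv_mul_mul_eq_pow_succ hab haMM)

theorem sup_zpowers_normal [Finite G] {a b c : G} (hgen : closure {a, b} = ⊤)
    (hc : c ∈ center G) (haba : a * b * a⁻¹ = b * c) : (zpowers c ⊔ zpowers b).Normal := by
  set H := zpowers c ⊔ zpowers b
  have hb : b ∈ H := mem_sup_right (mem_zpowers b)
  have hconj : H ≤ H.comap (MulAut.conj a).toMonoidHom := by
    refine sup_le (zpowers_le.2 ?_) (zpowers_le.2 ?_) <;>
      simp only [mem_comap, MulEquiv.coe_toMonoidHom, MulAut.conj_apply]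
    · rw [mem_center_iff.1 hc a, mul_inv_cancel_right]
      exact mem_sup_left (mem_zpowers c)
    · rw [haba]
      exact mul_mem hb (mem_sup_left (mem_zpowers c))
  rw [← normalizer_eq_top_iff, eq_top_iff, ← hgen, closure_le, Set.insert_subset_iff,
    Set.singleton_subset_iff]
  exact ⟨mem_normalizer_fintype fun x hx => hconj hx, le_normalizer hb⟩

end Presentation

theorem M3n_aut_cosets_general
    (n : ℕ) (hn : 4 ≤ n) {G : Type*} [Group G] [Finite G] (a b c : G)
    (hcard : Nat.card G = 3 ^ n) (ha : a ^ (3 ^ (n - 1)) = 1) (hb3 : b ^ 3 = 1)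
    (hab : b⁻¹ * a * b = a ^ (3 ^ (n - 2) + 1))
    (hgen : Subgroup.closure {a, b} = ⊤)
    (hc : c = a ^ (3 ^ (n - 2)))
    (Cs Bs Hs : Set G)
    (hCs : Cs = (Subgroup.zpowers c : Set G))
    (hBs : Bs = (Subgroup.zpowers b : Set G))
    (hHs : Hs = Cs * Bs)
    (Z0 Z1 Z2 Z3 Z4 Z5 : Set G) (Xk Yk Tj : ℕ → Set G) (S : Set (Set G))
    (hZ0 : Z0 = {1}) (hZ1 : Z1 = {b, b ^ 2}) (hZ2 : Z2 = {c, c ^ 2})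
    (hZ3 : Z3 = {c * b, c * b ^ 2, c ^ 2 * b, c ^ 2 * b ^ 2})
    (hZ4 : Z4 = a • ({1, c * b, c ^ 2 * b ^ 2} : Set G) ∪
        a⁻¹ • ({1, c ^ 2 * b, c * b ^ 2} : Set G))
    (hZ5 : Z5 = (a • Hs ∪ a⁻¹ • Hs) \ Z4)
    (hS : S = {Z0, Z1, Z2, Z3, Z4, Z5}
      ∪ {W | ∃ k : ℕ, 1 ≤ k ∧ k ≤ (3 ^ (n - 3) - 1) / 2 ∧ W = Xk k}
      ∪ {W | ∃ k : ℕ, 1 ≤ k ∧ k ≤ (3 ^ (n - 3) - 1) / 2 ∧ W = Yk k}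
      ∪ {W | ∃ j : ℕ, 2 ≤ j ∧ j ≤ (3 ^ (n - 2) - 1) / 2 ∧ ¬ (3 ∣ j) ∧ W = Tj j}) :
    ∀ f ∈ srAut S,
      Xor' (∀ g : G, f '' (g • Hs) = g • Hs)
           (∀ i : ℤ, f '' (a ^ i • Hs) = a ^ (-i) • Hs) := by
  intro f hf
  have hc3 : c ^ 3 = 1 := by rw [hc, ← pow_mul, ← pow_succ, show n - 2 + 1 = n - 1 by omega, ha]
  have hcen : c ∈ center G := hc ▸ pow_mem_center_of_inv_mul_mul_eq_pow_succ (by omega) ha hab hgen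
  set H := zpowers c ⊔ zpowers b
  have : H.Normal :=
    sup_zpowers_normal hgen hcen (hc ▸ mul_mul_inv_eq_of_inv_mul_mul_eq_pow_succ hab)
  have hHs' : Hs = H := by
    rw [hHs, hCs, hBs, coe_mul_of_left_le_normalizer_right _ _
      (zpowers_le.2 (center_le_normalizer _ hcen))]
  have hHZ : Hs = Z0 ∪ Z1 ∪ Z2 ∪ Z3 := by
    rw [hHs, hCs, hBs, hZ0, hZ1, hZ2, hZ3, coe_zpowers_mul_coe_zpowers_of_pow_three_eq_one hc3 hb3]
  have hKZ : a • Hs ∪ a⁻¹ • Hs = Z4 ∪ Z5 := by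
    rw [hZ5, Set.union_sdiff_cancel]
    rw [hZ4, hHZ, hZ0, hZ1, hZ2, hZ3]
    gcongr <;> simp [Set.insert_subset_iff]
  have hpres : ∀ Z ∈ ({Z0, Z1, Z2, Z3, Z4, Z5} : Set (Set G)), PreservesBasicRel f Z :=
    fun Z hZ => hf.2 Z (by rw [hS]; exact Or.inl (Or.inl (Or.inl hZ)))
  have hcardH : 2 * Nat.card H < Nat.card G := calc
    2 * Nat.card H ≤ 2 * (orderOf c * orderOf b) := by
      rw [← SetLike.coe_sort_coe, ← hHs', hHs, hCs, hBs]
      exact Nat.mul_le_mul_left 2 (natCard_coe_zpowers_mul_coe_zpowers_le b c)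
    _ ≤ 2 * (3 * 3) := by gcongr <;> exact orderOf_le_of_pow_eq_one three_pos ‹_›
    _ < 3 ^ 4 := by norm_num
    _ ≤ Nat.card G := hcard ▸ Nat.pow_le_pow_right three_pos hn
  rw [hHs'] at hHZ hKZ ⊢
  refine xor_image_smul_coe f hf.1 ?_ ?_
    (zpowers_mk_eq_top_of_closure_pair hgen (mem_sup_right (mem_zpowers b))) hcardH
  · rw [hHZ]
    exact (((hpres Z0 (by simp)).union (hpres Z1 (by simp))).union (hpres Z2 (by simp))).union
      (hpres Z3 (by simp))
  · rw [hKZ]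
    exact (hpres Z4 (by simp)).union (hpres Z5 (by simp))

/-- If the S-ring `𝒜` over `M_{3^n}` (`n ≥ 4`) is schurian, then every `α ∈ Aut(𝒜)`
either maps each coset of `H` to itself, or maps `aⁱH` to `a⁻ⁱH` for every `i` —
exactly one of the two. -/
theorem M3n_aut_cosets
    (n : ℕ) (hn : 4 ≤ n) {G : Type*} [Group G] [Finite G] (a b c : G)
    (hcard : Nat.card G = 3 ^ n) (ha : a ^ (3 ^ (n - 1)) = 1) (hb3 : b ^ 3 = 1)
    (hab : b⁻¹ * a * b = a ^ (3 ^ (n - 2) + 1))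
    (hgen : Subgroup.closure {a, b} = ⊤)
    (hc : c = a ^ (3 ^ (n - 2)))
    (Cs Bs Hs : Set G)
    (hCs : Cs = (Subgroup.zpowers c : Set G))
    (hBs : Bs = (Subgroup.zpowers b : Set G))
    (hHs : Hs = Cs * Bs)
    (Z0 Z1 Z2 Z3 Z4 Z5 : Set G) (Xk Yk Tj : ℕ → Set G) (S : Set (Set G))
    (hZ0 : Z0 = {1}) (hZ1 : Z1 = {b, b ^ 2}) (hZ2 : Z2 = {c, c ^ 2})
    (hZ3 : Z3 = {c * b, c * b ^ 2, c ^ 2 * b, c ^ 2 * b ^ 2})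
    (hZ4 : Z4 = a • ({1, c * b, c ^ 2 * b ^ 2} : Set G) ∪
        a⁻¹ • ({1, c ^ 2 * b, c * b ^ 2} : Set G))
    (hZ5 : Z5 = (a • Hs ∪ a⁻¹ • Hs) \ Z4)
    (hXk : ∀ k, Xk k = a ^ (3 * k) • Cs ∪ (a ^ (3 * k))⁻¹ • Cs)
    (hYk : ∀ k, Yk k = (a ^ (3 * k) • Hs ∪ (a ^ (3 * k))⁻¹ • Hs) \ Xk k)
    (hTj : ∀ j, Tj j = a ^ j • Hs ∪ (a ^ j)⁻¹ • Hs)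
    (hS : S = {Z0, Z1, Z2, Z3, Z4, Z5}
      ∪ {W | ∃ k : ℕ, 1 ≤ k ∧ k ≤ (3 ^ (n - 3) - 1) / 2 ∧ W = Xk k}
      ∪ {W | ∃ k : ℕ, 1 ≤ k ∧ k ≤ (3 ^ (n - 3) - 1) / 2 ∧ W = Yk k}
      ∪ {W | ∃ j : ℕ, 2 ≤ j ∧ j ≤ (3 ^ (n - 2) - 1) / 2 ∧ ¬ (3 ∣ j) ∧ W = Tj j})
    (hSR : IsSRing G S) (hSch : IsSchurian G S) :
    ∀ f ∈ srAut S,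
      Xor' (∀ g : G, f '' (g • Hs) = g • Hs)
           (∀ i : ℤ, f '' (a ^ i • Hs) = a ^ (-i) • Hs) :=
  M3n_aut_cosets_general n hn a b c hcard ha hb3 hab hgen hc Cs Bs Hs hCs hBs hHs Z0 Z1 Z2 Z3 Z4 Z5
    Xk Yk Tj S hZ0 hZ1 hZ2 hZ3 hZ4 hZ5 hS
end

section
/- Let n ≥ 4, G = M_{3^n}, c = a^{3^{n-2}}, C = ⟨c⟩, B = ⟨b⟩, H = C×B, and let 𝒜 be the S-ring over G whose basic sets are Z₀ = {e}, Z₁ = {b, b²}, Z₂ = {c, c²}, Z₃ = {cb, cb², c²b, c²b²}, Z₄ = a{e, cb, c²b²} ∪ a⁻¹{e, c²b, cb²}, Z₅ = (aH ∪ a⁻¹H) \ Z₄, X_k = a^{3k}C ∪ a^{-3k}C and Y_k = (a^{3k}H ∪ a^{-3k}H) \ X_k for k = 1,…,(3^{n-3}−1)/2, and T_j = a^jH ∪ a^{-j}H for 2 ≤ j ≤ (3^{n-2}−1)/2 with 3 ∤ j. If 𝒜 is schurian with K = Aut(𝒜), then K acts on Z₃ as the Klein four-group; that is, the restriction to H of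 every element of K is one of the following four permutations of H: the identity; (b,b²)(cb,cb²)(c²b,c²b²); (c,c²)(cb,c²b)(cb²,c²b²); (c,c²)(b,b²)(cb,c²b²)(cb²,c²b). -/
open scoped Pointwise

/-!
Every `f ∈ Aut(𝒜)` fixes `e`, hence maps each basic set into itself, so it permutes
`Z₁ = ⟨b⟩ \ {e}` and `Z₂ = ⟨c⟩ \ {e}`. Since `b` and `c` commute and `⟨b⟩ ∩ ⟨c⟩ = 1`
(`b ∉ ⟨a⟩ ⊇ ⟨c⟩`), an element `uv` of `H` with `u ∈ Z₂`, `v ∈ Z₁` is the only element lying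
`Z₂`-related to `v` and `Z₁`-related to `u`; as `f` preserves both relations,
`f (uv) = f u · f v`. So `f` acts on `H = C × B` as the product of its actions on `C` and `B`,
each of which is the identity or the swap of the two non-trivial elements.
-/

lemma zpowers_subset_of_pow_three_eq_one {G : Type*} [Group G] {g : G} (h : g ^ 3 = 1) :
    (Subgroup.zpowers g : Set G) ⊆ {1, g, g ^ 2} := by
  rintro _ ⟨k, rfl⟩
  have hmod : k % 3 = 0 ∨ k % 3 = 1 ∨ k % 3 = 2 := by omega
  simp only [zpow_eq_zpow_emod' k h, Set.mem_insert_iff, Set.mem_singleton_iff]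
  rcases hmod with hk | hk | hk <;> simp [hk]

lemma disjoint_zpowers_of_pow_three_eq_one {G : Type*} [Group G] {A : Subgroup G} {b : G}
    (hb3 : b ^ 3 = 1) (hbA : b ∉ A) : Disjoint A (Subgroup.zpowers b) := by
  rw [Subgroup.disjoint_def]
  intro y hyA hyb
  rcases zpowers_subset_of_pow_three_eq_one hb3 hyb with rfl | rfl | rfl
  · rfl
  · exact absurd hyA hbA
  · have hsq : (b ^ 2) ^ 2 = b := by
      rw [← pow_mul, show 2 * 2 = 3 + 1 from rfl, pow_succ, hb3, one_mul]
    exact absurd (hsq ▸ pow_mem hyA 2) hbA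

lemma zpowers_ne_top_of_pow_eq_one {G : Type*} [Group G] {a : G} {m : ℕ} (hm : 0 < m)
    (ha : a ^ m = 1) (hlt : m < Nat.card G) : Subgroup.zpowers a ≠ ⊤ := by
  intro htop
  have hcard : Nat.card G = orderOf a := by rw [← Subgroup.card_top, ← htop, Nat.card_zpowers]
  exact absurd (hcard ▸ orderOf_le_of_pow_eq_one hm ha) hlt.not_ge

lemma not_mem_zpowers_of_closure_pair_eq_top {G : Type*} [Group G] {a b : G}
    (hgen : Subgroup.closure {a, b} = ⊤) (ha : Subgroup.zpowers a ≠ ⊤) :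
    b ∉ Subgroup.zpowers a := by
  intro hb
  refine ha (eq_top_iff.2 (hgen ▸ (Subgroup.closure_le _).2 ?_))
  rintro x (rfl | rfl)
  exacts [Subgroup.mem_zpowers x, hb]

lemma disjoint_zpowers_of_closure_pair_eq_top {G : Type*} [Group G] {a b : G} {m : ℕ}
    (hgen : Subgroup.closure {a, b} = ⊤) (hm : 0 < m) (ha : a ^ m = 1) (hlt : m < Nat.card G)
    (hb3 : b ^ 3 = 1) : Disjoint (Subgroup.zpowers a) (Subgroup.zpowers b) :=
  disjoint_zpowers_of_pow_three_eq_one hb3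
    (not_mem_zpowers_of_closure_pair_eq_top hgen (zpowers_ne_top_of_pow_eq_one hm ha hlt))

lemma commute_pow_of_inv_mul_mul_eq_pow {G : Type*} [Group G] {a b : G} {N : ℕ}
    (hab : b⁻¹ * a * b = a ^ (N + 1)) (hN : a ^ (N * N) = 1) : Commute b (a ^ N) := by
  have hconj : b⁻¹ * (a ^ N * b) = a ^ N := by
    have h := conj_pow (a := b⁻¹) (b := a) (i := N)
    rw [inv_inv] at h
    rw [← mul_assoc, ← h, hab, ← pow_mul, add_one_mul, pow_add, hN, one_mul]
  exact (inv_mul_eq_iff_eq_mul.1 hconj).symm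

section srAut

variable {G : Type*} [Group G] {S : Set (Set G)} {f : Equiv.Perm G}

lemma apply_mem_of_mem_srAut (hf : f ∈ srAut S) {X : Set G} (hX : X ∈ S) {x : G}
    (hx : x ∈ X) : f x ∈ X := by
  simpa [hf.1] using (hf.2 X hX 1 x).1 (by simpa using hx)

lemma apply_pair_cases_of_mem_srAut (hf : f ∈ srAut S) {x y : G} (hxy : {x, y} ∈ S) :
    f x = x ∧ f y = y ∨ f x = y ∧ f y = x := by
  have hx := apply_mem_of_mem_srAut hf hxy (x := x) (by simp)
  have hy := apply_mem_of_mem_srAut hf hxy (x := y) (by simp)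
  simp only [Set.mem_insert_iff, Set.mem_singleton_iff] at hx hy
  have := f.injective.eq_iff (a := x) (b := y)
  grind

lemma apply_mul_of_mem_srAut (hf : f ∈ srAut S) {B C : Subgroup G} (hCB : Disjoint C B)
    (hcomm : ∀ u ∈ C, ∀ v ∈ B, Commute u v) {X Y : Set G} (hX : X ∈ S) (hY : Y ∈ S)
    (hXC : X ⊆ C) (hCX : (C : Set G) ⊆ insert 1 X) (hYB : Y ⊆ B)
    (hBY : (B : Set G) ⊆ insert 1 Y) {u v : G} (hu : u ∈ C) (hv : v ∈ B) :
    f (u * v) = f u * f v := by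
  rcases hCX hu with rfl | huX
  · simp [hf.1]
  rcases hBY hv with rfl | hvY
  · simp [hf.1]
  have hX' : f (u * v) * (f v)⁻¹ ∈ X :=
    (hf.2 X hX v (u * v)).1 (by rwa [mul_inv_cancel_right])
  have hY' : f (u * v) * (f u)⁻¹ ∈ Y :=
    (hf.2 Y hY u (u * v)).1 (by rwa [(hcomm u hu v hv).eq, mul_inv_cancel_right])
  have hfu : f u ∈ C := hXC (apply_mem_of_mem_srAut hf hX huX)
  have hfv : f v ∈ B := hYB (apply_mem_of_mem_srAut hf hY hvY)
  have hsplit := Subgroup.mul_injective_of_disjoint hCB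
    (a₁ := (⟨_, hXC hX'⟩, ⟨f v, hfv⟩)) (a₂ := (⟨f u, hfu⟩, ⟨_, hYB hY'⟩)) (by
      simp only
      rw [inv_mul_cancel_right, (hcomm _ hfu _ (hYB hY')).eq, inv_mul_cancel_right])
  have hfst : f (u * v) * (f v)⁻¹ = f u := congrArg (fun p => (p.1 : G)) hsplit
  rw [← hfst, inv_mul_cancel_right]

lemma apply_mul_of_mem_srAut_of_pow_three_eq_one (hf : f ∈ srAut S) {b c : G}
    (hb3 : b ^ 3 = 1) (hc3 : c ^ 3 = 1) (hbc : Commute b c)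
    (hCB : Disjoint (Subgroup.zpowers c) (Subgroup.zpowers b))
    (hbS : {b, b ^ 2} ∈ S) (hcS : {c, c ^ 2} ∈ S) {u v : G} (hu : u ∈ Subgroup.zpowers c)
    (hv : v ∈ Subgroup.zpowers b) : f (u * v) = f u * f v :=
  apply_mul_of_mem_srAut hf hCB (fun _ ⟨i, hi⟩ _ ⟨j, hj⟩ => hi ▸ hj ▸ hbc.symm.zpow_zpow i j)
    hcS hbS (by simp [Set.insert_subset_iff, Subgroup.mem_zpowers, pow_mem])
    (zpowers_subset_of_pow_three_eq_one hc3)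
    (by simp [Set.insert_subset_iff, Subgroup.mem_zpowers, pow_mem])
    (zpowers_subset_of_pow_three_eq_one hb3) hu hv

end srAut

theorem M3n_aut_on_H_general
    (n : ℕ) (hn : 4 ≤ n) {G : Type*} [Group G] (a b c : G)
    (hcard : Nat.card G = 3 ^ n) (ha : a ^ (3 ^ (n - 1)) = 1) (hb3 : b ^ 3 = 1)
    (hab : b⁻¹ * a * b = a ^ (3 ^ (n - 2) + 1))
    (hgen : Subgroup.closure {a, b} = ⊤)
    (hc : c = a ^ (3 ^ (n - 2)))
    (Cs Bs Hs : Set G)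
    (hCs : Cs = (Subgroup.zpowers c : Set G))
    (hBs : Bs = (Subgroup.zpowers b : Set G))
    (hHs : Hs = Cs * Bs)
    (Z0 Z1 Z2 Z3 Z4 Z5 : Set G) (Xk Yk Tj : ℕ → Set G) (S : Set (Set G))
    (hZ1 : Z1 = {b, b ^ 2}) (hZ2 : Z2 = {c, c ^ 2})
    (hS : S = {Z0, Z1, Z2, Z3, Z4, Z5}
      ∪ {W | ∃ k : ℕ, 1 ≤ k ∧ k ≤ (3 ^ (n - 3) - 1) / 2 ∧ W = Xk k}
      ∪ {W | ∃ k : ℕ, 1 ≤ k ∧ k ≤ (3 ^ (n - 3) - 1) / 2 ∧ W = Yk k}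
      ∪ {W | ∃ j : ℕ, 2 ≤ j ∧ j ≤ (3 ^ (n - 2) - 1) / 2 ∧ ¬ (3 ∣ j) ∧ W = Tj j}) :
    ∀ f ∈ srAut S,
      (∀ x ∈ Hs, f x = x) ∨
      (f 1 = 1 ∧ f b = b ^ 2 ∧ f (b ^ 2) = b ∧ f c = c ∧ f (c ^ 2) = c ^ 2 ∧
        f (c * b) = c * b ^ 2 ∧ f (c * b ^ 2) = c * b ∧
        f (c ^ 2 * b) = c ^ 2 * b ^ 2 ∧ f (c ^ 2 * b ^ 2) = c ^ 2 * b) ∨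
      (f 1 = 1 ∧ f b = b ∧ f (b ^ 2) = b ^ 2 ∧ f c = c ^ 2 ∧ f (c ^ 2) = c ∧
        f (c * b) = c ^ 2 * b ∧ f (c ^ 2 * b) = c * b ∧
        f (c * b ^ 2) = c ^ 2 * b ^ 2 ∧ f (c ^ 2 * b ^ 2) = c * b ^ 2) ∨
      (f 1 = 1 ∧ f b = b ^ 2 ∧ f (b ^ 2) = b ∧ f c = c ^ 2 ∧ f (c ^ 2) = c ∧
        f (c * b) = c ^ 2 * b ^ 2 ∧ f (c ^ 2 * b ^ 2) = c * b ∧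
        f (c * b ^ 2) = c ^ 2 * b ∧ f (c ^ 2 * b) = c * b ^ 2) := by
  intro f hf
  subst hZ1 hZ2 hHs hCs hBs
  have hc3 : c ^ 3 = 1 := by
    rwa [hc, ← pow_mul, ← pow_succ, show n - 2 + 1 = n - 1 by omega]
  have hbc : Commute b c := hc ▸ commute_pow_of_inv_mul_mul_eq_pow hab (by
    rw [← pow_add, show n - 2 + (n - 2) = n - 1 + (n - 3) by omega, pow_add, pow_mul, ha,
      one_pow])
  have hCB : Disjoint (Subgroup.zpowers c) (Subgroup.zpowers b) :=
    (disjoint_zpowers_of_closure_pair_eq_top hgen (by positivity) ha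
      (hcard ▸ Nat.pow_lt_pow_right (by norm_num) (by omega)) hb3).mono_left
      ((Subgroup.zpowers_le).2 (hc ▸ pow_mem (Subgroup.mem_zpowers a) _))
  have hbS : {b, b ^ 2} ∈ S := by rw [hS]; simp
  have hcS : {c, c ^ 2} ∈ S := by rw [hS]; simp
  have hmul : ∀ {u v : G}, u ∈ Subgroup.zpowers c → v ∈ Subgroup.zpowers b →
      f (u * v) = f u * f v :=
    apply_mul_of_mem_srAut_of_pow_three_eq_one hf hb3 hc3 hbc hCB hbS hcS
  have hc₁ := Subgroup.mem_zpowers c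
  have hb₁ := Subgroup.mem_zpowers b
  rcases apply_pair_cases_of_mem_srAut hf hbS with ⟨hfb₁, hfb₂⟩ | ⟨hfb₁, hfb₂⟩ <;>
    rcases apply_pair_cases_of_mem_srAut hf hcS with ⟨hfc₁, hfc₂⟩ | ⟨hfc₁, hfc₂⟩
  · left
    rintro _ ⟨u, hu, v, hv, rfl⟩
    rw [hmul hu hv]
    rcases zpowers_subset_of_pow_three_eq_one hc3 hu with rfl | rfl | rfl <;>
      rcases zpowers_subset_of_pow_three_eq_one hb3 hv with rfl | rfl | rfl <;>
      simp [hf.1, hfb₁, hfb₂, hfc₁, hfc₂]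
  all_goals simp [hmul hc₁ hb₁, hmul hc₁ (pow_mem hb₁ 2), hmul (pow_mem hc₁ 2) hb₁,
    hmul (pow_mem hc₁ 2) (pow_mem hb₁ 2), hf.1, hfb₁, hfb₂, hfc₁, hfc₂]

/-- If the S-ring `𝒜` over `M_{3^n}` (`n ≥ 4`) is schurian, then `K = Aut(𝒜)` acts on
`Z₃` as the Klein four-group: the restriction of each `f ∈ K` to `H` is one of four
explicit permutations. -/
theorem M3n_aut_on_H
    (n : ℕ) (hn : 4 ≤ n) {G : Type*} [Group G] [Finite G] (a b c : G)
    (hcard : Nat.card G = 3 ^ n) (ha : a ^ (3 ^ (n - 1)) = 1) (hb3 : b ^ 3 = 1)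
    (hab : b⁻¹ * a * b = a ^ (3 ^ (n - 2) + 1))
    (hgen : Subgroup.closure {a, b} = ⊤)
    (hc : c = a ^ (3 ^ (n - 2)))
    (Cs Bs Hs : Set G)
    (hCs : Cs = (Subgroup.zpowers c : Set G))
    (hBs : Bs = (Subgroup.zpowers b : Set G))
    (hHs : Hs = Cs * Bs)
    (Z0 Z1 Z2 Z3 Z4 Z5 : Set G) (Xk Yk Tj : ℕ → Set G) (S : Set (Set G))
    (hZ0 : Z0 = {1}) (hZ1 : Z1 = {b, b ^ 2}) (hZ2 : Z2 = {c, c ^ 2})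
    (hZ3 : Z3 = {c * b, c * b ^ 2, c ^ 2 * b, c ^ 2 * b ^ 2})
    (hZ4 : Z4 = a • ({1, c * b, c ^ 2 * b ^ 2} : Set G) ∪
        a⁻¹ • ({1, c ^ 2 * b, c * b ^ 2} : Set G))
    (hZ5 : Z5 = (a • Hs ∪ a⁻¹ • Hs) \ Z4)
    (hXk : ∀ k, Xk k = a ^ (3 * k) • Cs ∪ (a ^ (3 * k))⁻¹ • Cs)
    (hYk : ∀ k, Yk k = (a ^ (3 * k) • Hs ∪ (a ^ (3 * k))⁻¹ • Hs) \ Xk k)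
    (hTj : ∀ j, Tj j = a ^ j • Hs ∪ (a ^ j)⁻¹ • Hs)
    (hS : S = {Z0, Z1, Z2, Z3, Z4, Z5}
      ∪ {W | ∃ k : ℕ, 1 ≤ k ∧ k ≤ (3 ^ (n - 3) - 1) / 2 ∧ W = Xk k}
      ∪ {W | ∃ k : ℕ, 1 ≤ k ∧ k ≤ (3 ^ (n - 3) - 1) / 2 ∧ W = Yk k}
      ∪ {W | ∃ j : ℕ, 2 ≤ j ∧ j ≤ (3 ^ (n - 2) - 1) / 2 ∧ ¬ (3 ∣ j) ∧ W = Tj j})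
    (hSR : IsSRing G S) (hSch : IsSchurian G S) :
    ∀ f ∈ srAut S,
      (∀ x ∈ Hs, f x = x) ∨
      (f 1 = 1 ∧ f b = b ^ 2 ∧ f (b ^ 2) = b ∧ f c = c ∧ f (c ^ 2) = c ^ 2 ∧
        f (c * b) = c * b ^ 2 ∧ f (c * b ^ 2) = c * b ∧
        f (c ^ 2 * b) = c ^ 2 * b ^ 2 ∧ f (c ^ 2 * b ^ 2) = c ^ 2 * b) ∨
      (f 1 = 1 ∧ f b = b ∧ f (b ^ 2) = b ^ 2 ∧ f c = c ^ 2 ∧ f (c ^ 2) = c ∧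
        f (c * b) = c ^ 2 * b ∧ f (c ^ 2 * b) = c * b ∧
        f (c * b ^ 2) = c ^ 2 * b ^ 2 ∧ f (c ^ 2 * b ^ 2) = c * b ^ 2) ∨
      (f 1 = 1 ∧ f b = b ^ 2 ∧ f (b ^ 2) = b ∧ f c = c ^ 2 ∧ f (c ^ 2) = c ∧
        f (c * b) = c ^ 2 * b ^ 2 ∧ f (c ^ 2 * b ^ 2) = c * b ∧
        f (c * b ^ 2) = c ^ 2 * b ∧ f (c ^ 2 * b) = c * b ^ 2) :=
  M3n_aut_on_H_general n hn a b c hcard ha hb3 hab hgen hc Cs Bs Hs hCs hBs hHs Z0 Z1 Z2 Z3 Z4 Z5 Xk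
    Yk Tj S hZ1 hZ2 hS
end
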